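/- There exists a 4-simplex in Euclidean 4-space whose centroid coincides with its circumcenter but whose incenter is distinct from both, and there exists a 4-simplex whose incenter coincides with its centroid but whose circumcenter is distinct from both. Consequently, for 4-simplices the coincidence of centroid and circumcenter implies neither of the coincidences circumcenter = incenter or incenter = centroid, and the coincidence of incenter and centroid implies neither of the other two coincidences. -/

import Mathlib

/-
Common geometric notions for simplices in Euclidean d-space, following
Edmonds–Hajja–Martini, "Coincidences of simplex centers and related facial
structures".  A d-simplex is given by its d+1 affinely independent vertices
`A : Fin (d+1) → EuclideanSpace ℝ (Fin d)`.
-/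

noncomputable section

abbrev Pt (d : ℕ) : Type := EuclideanSpace ℝ (Fin d)

variable {d : ℕ}

/-- The centroid of the simplex with vertices `A`: the average of the vertices. -/
def ctr (A : Fin (d+1) → Pt d) : Pt d := Finset.centroid ℝ Finset.univ A

/-- `C` is a circumcenter of the simplex with vertices `A`:
it is equidistant from all the vertices. -/
def IsCircumcenter (A : Fin (d+1) → Pt d) (C : Pt d) : Prop :=
  ∃ r : ℝ, ∀ i, dist C (A i) = r

/-- The affine span (hyperplane) of the facet opposite to vertex `j`. -/
def facetSpan (A : Fin (d+1) → Pt d) (j : Fin (d+1)) : Set (Pt d) :=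
  (affineSpan ℝ (A '' {i | i ≠ j}) : Set (Pt d))

/-- `I` is the incenter of the simplex with vertices `A`: an interior point
equidistant from the affine hyperplanes spanned by the facets. -/
def IsIncenter (A : Fin (d+1) → Pt d) (I : Pt d) : Prop :=
  I ∈ interior (convexHull ℝ (Set.range A)) ∧
    ∃ r : ℝ, ∀ j, Metric.infDist I (facetSpan A j) = r

/-- `F` is a Fermat-Torricelli point of the simplex with vertices `A`:
it minimizes the sum of the distances to the vertices. -/
def IsFermatPoint (A : Fin (d+1) → Pt d) (F : Pt d) : Prop :=
  ∀ Q : Pt d, ∑ i, dist F (A i) ≤ ∑ i, dist Q (A i)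

/-- The altitude of the simplex at vertex `j`: the distance from `A j` to the
affine span of the opposite facet. -/
def altitude (A : Fin (d+1) → Pt d) (j : Fin (d+1)) : ℝ :=
  Metric.infDist (A j) (facetSpan A j)

/-- Equiareal: all facets have the same `(d-1)`-dimensional volume; equivalently
(since `d · vol S = facet volume · altitude`), all altitudes are equal. -/
def Equiareal (A : Fin (d+1) → Pt d) : Prop :=
  ∀ j k, altitude A j = altitude A k

/-- `r` is the circumradius of the facet opposite `j`: some point of the affine
span of the facet is at distance `r` from all its vertices. -/
def IsFacetCircumradius (A : Fin (d+1) → Pt d) (j : Fin (d+1)) (r : ℝ) : Prop :=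
  ∃ C ∈ affineSpan ℝ (A '' {i | i ≠ j}), ∀ i, i ≠ j → dist C (A i) = r

/-- Equiradial: all facets have the same circumradius. -/
def Equiradial (A : Fin (d+1) → Pt d) : Prop :=
  ∃ r : ℝ, ∀ j, IsFacetCircumradius A j r

/-- Equifacetal: any two facets are congruent, i.e. there is an isometry of the
ambient space carrying the vertex set of one facet onto that of the other. -/
def Equifacetal (A : Fin (d+1) → Pt d) : Prop :=
  ∀ j k, ∃ f : Pt d ≃ᵢ Pt d, f '' (A '' {i | i ≠ j}) = A '' {i | i ≠ k}

/-- Regular: all edges have equal length. -/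
def Regular (A : Fin (d+1) → Pt d) : Prop :=
  ∀ i j k l, i ≠ j → k ≠ l → dist (A i) (A j) = dist (A k) (A l)

/-!
Both halves are witnessed by explicit rational simplices (named after the paper's 𝒢, 𝒞, ℐ).
The vertices of `simplexGC` all have norm √50 and sum to zero, so its centroid is its
circumcenter, yet the centroid is at distance √(3/7) from the hyperplane of facet 0 and at
distance 1 from that of facet 3. In `simplexIG` the centroid is at distance √(12/25) from all
five facet hyperplanes but at different distances from vertices 0 and 3.

A distance to a facet hyperplane is computed from the foot of the perpendicular, given by its
barycentric coordinates: a point `q` of an affine span with `p - q` orthogonal to the spanning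
points realises `infDist p`, by Pythagoras.
-/

open scoped RealInnerProductSpace
open Metric

theorem infDist_affineSpan_eq_dist {E : Type*} [NormedAddCommGroup E] [InnerProductSpace ℝ E]
    {s : Set E} {p q : E} (hq : q ∈ affineSpan ℝ s) (horth : ∀ x ∈ s, ⟪p - q, x - q⟫ = 0) :
    infDist p (affineSpan ℝ s) = dist p q := by
  have hspan : affineSpan ℝ s ≤ AffineSubspace.mk' q (LinearMap.ker (innerₛₗ ℝ (p - q))) :=
    affineSpan_le.mpr fun x hx => by
      rw [SetLike.mem_coe, AffineSubspace.mem_mk', LinearMap.mem_ker]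
      exact horth x hx
  refine le_antisymm (infDist_le_dist_of_mem hq) ((le_infDist ⟨q, hq⟩).mpr fun y hy => ?_)
  have hqy : ⟪p - q, q - y⟫ = 0 := by
    have hyq : ⟪p - q, y - q⟫ = 0 := (AffineSubspace.mem_mk'.mp (hspan hy) :)
    rw [← neg_sub y q, inner_neg_right, hyq, neg_zero]
  have hpyth : ‖p - y‖ * ‖p - y‖ = ‖p - q‖ * ‖p - q‖ + ‖q - y‖ * ‖q - y‖ := by
    rw [← sub_add_sub_cancel p q y]
    exact norm_add_sq_eq_norm_sq_add_norm_sq_real hqy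
  rw [dist_eq_norm, dist_eq_norm]
  nlinarith [norm_nonneg (p - q), norm_nonneg (p - y), mul_self_nonneg ‖q - y‖]

theorem sum_smul_mem_affineSpan_image {ι k V : Type*} [Fintype ι] [Ring k] [Nontrivial k]
    [AddCommGroup V] [Module k V] {p : ι → V} {s : Set ι} {w : ι → k}
    (hw : ∑ i, w i = 1) (hws : ∀ i ∉ s, w i = 0) :
    ∑ i, w i • p i ∈ affineSpan k (p '' s) := by
  rw [← Finset.univ.affineCombination_eq_linear_combination p w hw]
  exact affineCombination_mem_affineSpan_image hw (fun i _ hi => hws i hi) p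

theorem affineIndependent_of_forall_sum_smul_eq_zero {ι k V : Type*} [Fintype ι] [Ring k]
    [AddCommGroup V] [Module k V] {p : ι → V}
    (h : ∀ w : ι → k, ∑ i, w i = 0 → ∑ i, w i • p i = 0 → ∀ i, w i = 0) :
    AffineIndependent k p :=
  (affineIndependent_iff_of_fintype (k := k) p).2 fun w hw hs =>
    h w hw (by rwa [Finset.weightedVSub_eq_linear_combination _ hw] at hs)

theorem ctr_eq_smul_sum (A : Fin (d + 1) → Pt d) : ctr A = ((d : ℝ) + 1)⁻¹ • ∑ i, A i := by
  have hw : ∑ i, (Finset.univ : Finset (Fin (d + 1))).centroidWeights ℝ i = 1 := by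
    simp only [Finset.centroidWeights_apply, Finset.sum_const, Finset.card_univ, Fintype.card_fin,
      nsmul_eq_mul, Nat.cast_add, Nat.cast_one]
    field_simp
  rw [ctr, Finset.centroid_def, Finset.affineCombination_eq_linear_combination _ _ _ hw]
  simp [Finset.centroidWeights_apply, Finset.smul_sum]

theorem ctr_mem_interior_convexHull {A : Fin (d + 1) → Pt d} (hA : AffineIndependent ℝ A) :
    ctr A ∈ interior (convexHull ℝ (Set.range A)) :=
  (⟨A, hA, hA.affineSpan_eq_top_iff_card_eq_finrank_add_one.mpr (by simp)⟩ :
    AffineBasis (Fin (d + 1)) ℝ (Pt d)).centroid_mem_interior_convexHull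

theorem infDist_facetSpan_eq_dist {A : Fin (d + 1) → Pt d} {j : Fin (d + 1)} {p : Pt d}
    (w : Fin (d + 1) → ℝ) (hw : ∑ i, w i = 1) (hwj : w j = 0)
    (horth : ∀ i ≠ j, ⟪p - ∑ k, w k • A k, A i - ∑ k, w k • A k⟫ = 0) :
    infDist p (facetSpan A j) = dist p (∑ k, w k • A k) := by
  refine infDist_affineSpan_eq_dist
    (sum_smul_mem_affineSpan_image hw fun i hi => by rwa [not_not.mp hi]) ?_
  rintro _ ⟨i, hi, rfl⟩
  exact horth i hi

def simplexGC : Fin 5 → Pt 4 :=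
  ![!₂[-7, -1, 0, 0], !₂[-4, 3, -5, 0], !₂[0, -5, 4, -3], !₂[5, 5, 0, 0], !₂[6, -2, 1, 3]]

def simplexIG : Fin 5 → Pt 4 :=
  ![!₂[3, 0, 0, 0], !₂[0, 3, 0, 0], !₂[0, 0, 3, 0], !₂[3, 3, 3, 2], !₂[3, 3, 3, -2]]

theorem simplexGC_affineIndependent : AffineIndependent ℝ simplexGC := by
  refine affineIndependent_of_forall_sum_smul_eq_zero fun w hw hs => ?_
  have hcoord := fun k => congrArg (fun v : Pt 4 => v k) hs
  simp [Fin.forall_fin_succ, simplexGC, Fin.sum_univ_five] at hcoord hw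
  obtain ⟨e0, e1, e2, e3⟩ := hcoord
  intro i
  fin_cases i <;> simp <;> linarith

theorem simplexIG_affineIndependent : AffineIndependent ℝ simplexIG := by
  refine affineIndependent_of_forall_sum_smul_eq_zero fun w hw hs => ?_
  have hcoord := fun k => congrArg (fun v : Pt 4 => v k) hs
  simp [Fin.forall_fin_succ, simplexIG, Fin.sum_univ_five] at hcoord hw
  obtain ⟨e0, e1, e2, e3⟩ := hcoord
  intro i
  fin_cases i <;> simp <;> linarith

theorem ctr_simplexGC : ctr simplexGC = 0 := by
  rw [ctr_eq_smul_sum]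
  ext i
  fin_cases i <;> norm_num [simplexGC, Fin.sum_univ_succ]

theorem ctr_simplexIG : ctr simplexIG = !₂[9/5, 9/5, 9/5, 0] := by
  rw [ctr_eq_smul_sum]
  ext i
  fin_cases i <;> norm_num [simplexIG, Fin.sum_univ_succ]

theorem simplexGC_isCircumcenter_ctr : IsCircumcenter simplexGC (ctr simplexGC) := by
  refine ⟨√50, fun i => ?_⟩
  rw [ctr_simplexGC, EuclideanSpace.dist_eq]
  fin_cases i <;> norm_num [simplexGC, Fin.sum_univ_succ]

theorem infDist_ctr_facetSpan_simplexGC_zero :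
    infDist (ctr simplexGC) (facetSpan simplexGC 0) = √(3 / 7) := by
  rw [infDist_facetSpan_eq_dist ![0, 13/35, 11/35, 9/70, 13/70]
    (by norm_num [Fin.sum_univ_succ]) rfl]
  · rw [ctr_simplexGC, EuclideanSpace.dist_eq]
    norm_num [simplexGC, Fin.sum_univ_succ]
  · intro i hi
    rw [ctr_simplexGC]
    fin_cases i <;> simp at hi <;> norm_num [simplexGC, Fin.sum_univ_succ, PiLp.inner_apply]

theorem infDist_ctr_facetSpan_simplexGC_three :
    infDist (ctr simplexGC) (facetSpan simplexGC 3) = 1 := by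
  rw [infDist_facetSpan_eq_dist ![1/30, 2/5, 4/15, 0, 3/10]
    (by norm_num [Fin.sum_univ_succ]) rfl]
  · rw [ctr_simplexGC, EuclideanSpace.dist_eq]
    norm_num [simplexGC, Fin.sum_univ_succ]
  · intro i hi
    rw [ctr_simplexGC]
    fin_cases i <;> simp at hi <;> norm_num [simplexGC, Fin.sum_univ_succ, PiLp.inner_apply]

theorem simplexGC_not_isIncenter_ctr : ¬ IsIncenter simplexGC (ctr simplexGC) := by
  rintro ⟨-, r, hr⟩
  have h := (hr 0).trans (hr 3).symm
  rw [infDist_ctr_facetSpan_simplexGC_zero, infDist_ctr_facetSpan_simplexGC_three,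
    Real.sqrt_eq_one] at h
  norm_num at h

/-- Row `j` holds the barycentric coordinates of the foot of the perpendicular from the
centroid of `simplexIG` to the hyperplane of facet `j`. -/
def simplexIGFootWeights : Fin 5 → Fin 5 → ℝ :=
  ![![0, 4/15, 4/15, 7/30, 7/30], ![4/15, 0, 4/15, 7/30, 7/30], ![4/15, 4/15, 0, 7/30, 7/30],
    ![7/30, 7/30, 7/30, 0, 3/10], ![7/30, 7/30, 7/30, 3/10, 0]]

theorem infDist_ctr_facetSpan_simplexIG (j : Fin 5) :
    infDist (ctr simplexIG) (facetSpan simplexIG j) = √(12 / 25) := by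
  rw [infDist_facetSpan_eq_dist (simplexIGFootWeights j)]
  · rw [ctr_simplexIG, EuclideanSpace.dist_eq]
    fin_cases j <;>
      norm_num [simplexIGFootWeights, simplexIG, Fin.sum_univ_succ, Real.dist_eq, sq_abs]
  · fin_cases j <;> norm_num [simplexIGFootWeights, Fin.sum_univ_succ]
  · fin_cases j <;> rfl
  · intro i hi
    rw [ctr_simplexIG]
    fin_cases j <;> fin_cases i <;> simp at hi <;>
      norm_num [simplexIGFootWeights, simplexIG, Fin.sum_univ_succ, PiLp.inner_apply]

theorem simplexIG_isIncenter_ctr : IsIncenter simplexIG (ctr simplexIG) :=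
  ⟨ctr_mem_interior_convexHull simplexIG_affineIndependent, _, infDist_ctr_facetSpan_simplexIG⟩

theorem simplexIG_not_isCircumcenter_ctr : ¬ IsCircumcenter simplexIG (ctr simplexIG) := by
  rintro ⟨r, hr⟩
  have h := (hr 0).trans (hr 3).symm
  rw [ctr_simplexIG, EuclideanSpace.dist_eq, EuclideanSpace.dist_eq,
    Real.sqrt_inj (by positivity) (by positivity)] at h
  simp [simplexIG, Fin.sum_univ_four, Real.dist_eq] at h
  norm_num at h

/-- Theorem 4.4. There is a 4-simplex whose centroid
coincides with its circumcenter but whose incenter is distinct from both, and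
there is a 4-simplex whose incenter coincides with its centroid but whose
circumcenter is distinct from both.  Consequently, for 4-simplices `𝒢 = 𝒞`
implies neither `𝒞 = ℐ` nor `ℐ = 𝒢`, and `ℐ = 𝒢` implies neither `𝒢 = 𝒞` nor
`𝒞 = ℐ`. -/
theorem statement14 :
    (∃ A : Fin 5 → Pt 4, AffineIndependent ℝ A ∧
      IsCircumcenter A (ctr A) ∧ ¬ IsIncenter A (ctr A)) ∧
    (∃ A : Fin 5 → Pt 4, AffineIndependent ℝ A ∧
      IsIncenter A (ctr A) ∧ ¬ IsCircumcenter A (ctr A)) :=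
  ⟨⟨simplexGC, simplexGC_affineIndependent, simplexGC_isCircumcenter_ctr,
      simplexGC_not_isIncenter_ctr⟩,
    ⟨simplexIG, simplexIG_affineIndependent, simplexIG_isIncenter_ctr,
      simplexIG_not_isCircumcenter_ctr⟩⟩
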